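/- arXiv:2503.14898 — 3 statements merged into one kernel-verified Lean document; each statement's English description precedes it below -/
import Mathlib

section
/- For real matrices A ∈ ℝ^{n×m} and B ∈ ℝ^{l×k}, the column space of Aᵀ ⊗ Bᵀ equals the intersection of the column space of Aᵀ ⊗ I_k with the column space of I_m ⊗ Bᵀ. -/
open Matrix Kronecker

lemma aux_retraction {M N : Type*} [AddCommGroup M] [Module ℝ M] [AddCommGroup N] [Module ℝ N]
    (f : M →ₗ[ℝ] N) : ∃ g : N →ₗ[ℝ] M, ∀ y ∈ LinearMap.range f, f (g y) = y := by
  obtain ⟨T, hT⟩ := Submodule.exists_isCompl (LinearMap.range f)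
  obtain ⟨s, hs⟩ := f.rangeRestrict.exists_rightInverse_of_surjective f.range_rangeRestrict
  refine ⟨s.comp ((LinearMap.range f).linearProjOfIsCompl T hT), ?_⟩
  intro y hy
  have h1 : ((LinearMap.range f).linearProjOfIsCompl T hT) y = ⟨y, hy⟩ :=
    Submodule.linearProjOfIsCompl_apply_left hT ⟨y, hy⟩
  have h2 : f.rangeRestrict (s ⟨y, hy⟩) = ⟨y, hy⟩ := by
    rw [← LinearMap.comp_apply, hs]; rfl
  have h3 := congrArg Subtype.val h2
  simp only [LinearMap.comp_apply, h1]
  exact h3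

/-- Col(Aᵀ ⊗ Bᵀ) = Col(Aᵀ ⊗ I_k) ∩ Col(I_m ⊗ Bᵀ). -/
theorem stmt1 (n m l k : ℕ) (A : Matrix (Fin n) (Fin m) ℝ) (B : Matrix (Fin l) (Fin k) ℝ) :
    LinearMap.range (Aᵀ ⊗ₖ Bᵀ).mulVecLin =
      LinearMap.range (Aᵀ ⊗ₖ (1 : Matrix (Fin k) (Fin k) ℝ)).mulVecLin ⊓
      LinearMap.range ((1 : Matrix (Fin m) (Fin m) ℝ) ⊗ₖ Bᵀ).mulVecLin := by
  apply le_antisymm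
  · apply le_inf
    · have h : Aᵀ ⊗ₖ Bᵀ = (Aᵀ ⊗ₖ (1 : Matrix (Fin k) (Fin k) ℝ)) *
          ((1 : Matrix (Fin n) (Fin n) ℝ) ⊗ₖ Bᵀ) := by
        rw [← mul_kronecker_mul, Matrix.mul_one, Matrix.one_mul]
      rw [h, Matrix.mulVecLin_mul]
      exact LinearMap.range_comp_le_range _ _
    · have h : Aᵀ ⊗ₖ Bᵀ = ((1 : Matrix (Fin m) (Fin m) ℝ) ⊗ₖ Bᵀ) *
          (Aᵀ ⊗ₖ (1 : Matrix (Fin l) (Fin l) ℝ)) := by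
        rw [← mul_kronecker_mul, Matrix.mul_one, Matrix.one_mul]
      rw [h, Matrix.mulVecLin_mul]
      exact LinearMap.range_comp_le_range _ _
  · rintro x ⟨⟨v, hv⟩, ⟨w, hw⟩⟩
    set f := Aᵀ.mulVecLin with hf
    set h := Bᵀ.mulVecLin with hh
    obtain ⟨g, hg⟩ := aux_retraction f
    obtain ⟨g', hg'⟩ := aux_retraction h
    set G := LinearMap.toMatrix' g with hG
    set H := LinearMap.toMatrix' g' with hH
    set P := Aᵀ * G with hP
    set Q := Bᵀ * H with hQ
    -- columns of x are in range f
    have hcol : ∀ j : Fin k, (fun i => x (i, j)) ∈ LinearMap.range f := by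
      intro j
      refine ⟨fun p => v (p, j), ?_⟩
      funext i
      have := congrFun hv (i, j)
      simp only [mulVecLin_apply, mulVec, dotProduct, Fintype.sum_prod_type,
        kroneckerMap_apply, Matrix.one_apply] at this ⊢
      rw [← this]
      simp [hf, mulVec, vecMul, dotProduct, mul_ite, ite_mul, Finset.sum_ite_eq, Finset.sum_ite_eq', mul_comm]
    have hrow : ∀ i : Fin m, (fun j => x (i, j)) ∈ LinearMap.range h := by
      intro i
      refine ⟨fun q => w (i, q), ?_⟩
      funext j
      have := congrFun hw (i, j)
      simp only [mulVecLin_apply, mulVec, dotProduct, Fintype.sum_prod_type,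
        kroneckerMap_apply, Matrix.one_apply] at this ⊢
      rw [← this]
      rw [Finset.sum_comm]
      simp [hh, mulVec, vecMul, dotProduct, mul_ite, ite_mul, Finset.sum_ite_eq, Finset.sum_ite_eq', mul_comm]
    have hPfix : ∀ y ∈ LinearMap.range f, P.mulVec y = y := by
      intro y hy
      rw [hP, ← Matrix.mulVec_mulVec]
      have hGy : G.mulVec y = g y := by
        rw [hG, ← Matrix.mulVecLin_apply, ← Matrix.toLin'_apply',
          Matrix.toLin'_toMatrix']
      rw [hGy]
      exact hg y hy
    have hQfix : ∀ y ∈ LinearMap.range h, Q.mulVec y = y := by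
      intro y hy
      rw [hQ, ← Matrix.mulVec_mulVec]
      have hHy : H.mulVec y = g' y := by
        rw [hH, ← Matrix.mulVecLin_apply, ← Matrix.toLin'_apply',
          Matrix.toLin'_toMatrix']
      rw [hHy]
      exact hg' y hy
    refine ⟨(G ⊗ₖ H).mulVec x, ?_⟩
    have key : (Aᵀ ⊗ₖ Bᵀ).mulVec ((G ⊗ₖ H).mulVec x) = (P ⊗ₖ Q).mulVec x := by
      rw [Matrix.mulVec_mulVec, ← mul_kronecker_mul]
    rw [mulVecLin_apply, key]
    funext ij
    obtain ⟨i, j⟩ := ij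
    have colstep : ∀ q : Fin k, ∑ p : Fin m, P i p * x (p, q) = x (i, q) := by
      intro q
      have := congrFun (hPfix _ (hcol q)) i
      simpa [mulVec, dotProduct] using this
    have rowstep : ∑ q : Fin k, Q j q * x (i, q) = x (i, j) := by
      have := congrFun (hQfix _ (hrow i)) j
      simpa [mulVec, dotProduct] using this
    calc ((P ⊗ₖ Q).mulVec x) (i, j)
        = ∑ p : Fin m, ∑ q : Fin k, P i p * Q j q * x (p, q) := by
          simp [mulVec, dotProduct, Fintype.sum_prod_type, kroneckerMap_apply]
      _ = ∑ q : Fin k, Q j q * ∑ p : Fin m, P i p * x (p, q) := by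
          rw [Finset.sum_comm]
          congr 1; funext q
          rw [Finset.mul_sum]
          congr 1; funext p
          ring
      _ = x (i, j) := by
          simp only [colstep]
          exact rowstep
end

section
/- Let z(i) ∈ ℝ^p and C(i) ∈ ℝ^{n×p} for i = 1,…,N, and let M ∈ ℝ^{Nn×p²} be the matrix whose i-th block row is z(i)ᵀ ⊗ C(i). If M has full column rank p², then the stacked matrix [C(1)ᵀ, …, C(N)ᵀ]ᵀ has full column rank p. -/
open Matrix Kronecker

/-- If the matrix M with block rows z(i)ᵀ ⊗ C(i) has full column rank (trivial kernel),
then the stacked matrix [C(1)ᵀ, …, C(N)ᵀ]ᵀ has full column rank p. -/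
theorem stmt6 (n p N : ℕ) (z : Fin N → Fin p → ℝ) (C : Fin N → Matrix (Fin n) (Fin p) ℝ)
    (hM : ∀ v : Fin p × Fin p → ℝ,
      (∀ i : Fin N,
        ((Matrix.of fun (_ : Fin 1) j => z i j) ⊗ₖ C i).mulVec v = 0) → v = 0) :
    ∀ w : Fin p → ℝ, (∀ i : Fin N, (C i).mulVec w = 0) → w = 0 := by
  intro w hw
  have hv : (fun jk : Fin p × Fin p => w jk.1 * w jk.2) = 0 := by
    apply hM
    intro i
    funext ab
    obtain ⟨a, b⟩ := ab
    have hb : (C i).mulVec w b = 0 := by rw [hw i]; rfl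
    simp only [Matrix.mulVec, dotProduct, Fintype.sum_prod_type,
      Matrix.kroneckerMap_apply, Matrix.of_apply, Pi.zero_apply]
    have : ∀ j : Fin p, ∑ k, z i j * (C i) b k * (w j * w k)
        = z i j * w j * ((C i).mulVec w b) := by
      intro j
      simp only [Matrix.mulVec, dotProduct, Finset.mul_sum]
      congr 1; funext k; ring
    rw [Finset.sum_congr rfl fun j _ => this j]
    simp [hb]
  funext j
  have := congrFun hv (j, j)
  simpa [mul_self_eq_zero] using this
end

section
/- Let C(t) ∈ ℝ^{n×p} for t = 0,…,N−1, let D ∈ ℝ^{p×p} be diagonal, and let ξ(0) ∈ ℝ^p have all components nonzero, with ξ(t) = D^t ξ(0). Define F(t) = 𝟙_pᵀ ⊗ C(t), Λ = D ⊗ I_p, Q ∈ ℝ^{Nn×p²} with block rows ξ(t)ᵀ ⊗ C(t), and W ∈ ℝ^{Nn×p²} with block rows F(t) Λ^t. Then Q has full column rank if and only if W has full column rank. -/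
open Matrix Kronecker

/-!
Both matrices are built from the same blocks: with `Ξ(t) = diag(ξ(t)) ⊗ I_p` one has
`ξ(t)ᵀ ⊗ C(t) = F(t) Ξ(t)`, and since all these matrices are diagonal, `Ξ(t) = Λ^t Ξ(0)`.
Hence `Q = W Ξ(0)`, and `Ξ(0)` is invertible because no component of `ξ(0)` vanishes;
right multiplication by an invertible matrix does not change the column rank.
-/

namespace Matrix

variable {ι l m n o α : Type*}

theorem forall_mul_mulVec_eq_zero_imp_iff [Fintype n] [DecidableEq n] [CommRing α]
    (M : ι → Matrix m n α) {P : Matrix n n α} (hP : IsUnit P) :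
    (∀ v, (∀ i, (M i * P) *ᵥ v = 0) → v = 0) ↔ (∀ v, (∀ i, M i *ᵥ v = 0) → v = 0) := by
  obtain ⟨P, rfl⟩ := hP
  simp only [← mulVec_mulVec]
  constructor
  · intro h v hv
    have hPv : (↑P⁻¹ : Matrix n n α) *ᵥ v = 0 :=
      h _ fun i => by simpa [mulVec_mulVec] using hv i
    simpa [mulVec_mulVec] using congrArg ((P : Matrix n n α) *ᵥ ·) hPv
  · intro h v hv
    simpa [mulVec_mulVec] using congrArg ((↑P⁻¹ : Matrix n n α) *ᵥ ·) (h _ hv)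

theorem diagonal_kronecker_one [DecidableEq m] [DecidableEq n] [MulZeroOneClass α]
    (x : m → α) :
    diagonal x ⊗ₖ (1 : Matrix n n α) = diagonal fun jk : m × n => x jk.1 := by
  rw [← diagonal_one, diagonal_kronecker_diagonal]
  simp only [mul_one]

theorem of_const_kronecker_eq_mul [Fintype m] [DecidableEq m] [Fintype n] [DecidableEq n]
    [CommSemiring α] (x : m → α) (A : Matrix l n α) :
    of (fun (_ : o) j => x j) ⊗ₖ A
      = (of (fun (_ : o) (_ : m) => (1 : α)) ⊗ₖ A) * (diagonal x ⊗ₖ (1 : Matrix n n α)) := by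
  rw [← mul_kronecker_mul, Matrix.mul_one]
  congr 1
  ext i j
  simp [mul_diagonal]

theorem diagonal_pow_mulVec_kronecker_one [Fintype m] [DecidableEq m] [Fintype n] [DecidableEq n]
    [CommSemiring α] (d x : m → α) (t : ℕ) :
    diagonal (diagonal d ^ t *ᵥ x) ⊗ₖ (1 : Matrix n n α)
      = (diagonal d ⊗ₖ (1 : Matrix n n α)) ^ t * (diagonal x ⊗ₖ (1 : Matrix n n α)) := by
  simp only [diagonal_kronecker_one, diagonal_pow, diagonal_mul_diagonal, mulVec_diagonal]
  rfl

end Matrix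

/-- With ξ(t) = D^t ξ(0) (D diagonal, all entries of ξ(0) nonzero), the matrix Q with block
rows ξ(t)ᵀ ⊗ C(t) has full column rank iff the matrix W with block rows
(𝟙_pᵀ ⊗ C(t)) Λ^t, Λ = D ⊗ I_p, has full column rank. -/
theorem stmt11 (n p N : ℕ) (C : Fin N → Matrix (Fin n) (Fin p) ℝ)
    (d : Fin p → ℝ) (ξ0 : Fin p → ℝ) (hξ0 : ∀ i, ξ0 i ≠ 0)
    (ξ : Fin N → Fin p → ℝ)
    (hξ : ∀ t : Fin N, ξ t = ((Matrix.diagonal d) ^ (t : ℕ)).mulVec ξ0) :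
    (∀ v : Fin p × Fin p → ℝ,
        (∀ t : Fin N,
          ((Matrix.of fun (_ : Fin 1) j => ξ t j) ⊗ₖ C t).mulVec v = 0) → v = 0) ↔
      (∀ v : Fin p × Fin p → ℝ,
        (∀ t : Fin N,
          (((Matrix.of fun (_ : Fin 1) (_ : Fin p) => (1 : ℝ)) ⊗ₖ C t) *
            (Matrix.diagonal d ⊗ₖ (1 : Matrix (Fin p) (Fin p) ℝ)) ^ (t : ℕ)).mulVec v = 0)
          → v = 0) := by
  have hQW : ∀ t : Fin N, (of fun (_ : Fin 1) j => ξ t j) ⊗ₖ C t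
      = ((of fun (_ : Fin 1) (_ : Fin p) => (1 : ℝ)) ⊗ₖ C t) *
          (diagonal d ⊗ₖ (1 : Matrix (Fin p) (Fin p) ℝ)) ^ (t : ℕ) *
          (diagonal ξ0 ⊗ₖ (1 : Matrix (Fin p) (Fin p) ℝ)) := fun t => by
    rw [of_const_kronecker_eq_mul, hξ, diagonal_pow_mulVec_kronecker_one, Matrix.mul_assoc]
  have hΞ0 : IsUnit (diagonal ξ0 ⊗ₖ (1 : Matrix (Fin p) (Fin p) ℝ)) := by
    rw [diagonal_kronecker_one, isUnit_diagonal, Pi.isUnit_iff]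
    exact fun jk => (hξ0 jk.1).isUnit
  simp only [hQW]
  exact forall_mul_mulVec_eq_zero_imp_iff _ hΞ0
end
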